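/- arXiv:2112.11546 — 3 statements merged into one kernel-verified Lean document; each statement's English description precedes it below -/
import Mathlib

section
/- Preservation theorem for join abstraction: let F = (I, trans, K, δ) be a featured transition system over state type S and let Φ be any linear-time property over S. If the join abstraction satisfies Φ, i.e. α_K(F) ⊨ Φ, then F ⊨ Φ, i.e. π_k(F) ⊨ Φ for every k ∈ K. -/
def Paths {S : Type*} (I : Set S) (trans : Set (S × S)) : Set (ℕ → S) :=
  {ρ | ρ 0 ∈ I ∧ ∀ i, (ρ i, ρ (i + 1)) ∈ trans}

theorem paths_monotone {S : Type*} (I : Set S) : Monotone (Paths I) :=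
  fun _ _ ht _ hρ => ⟨hρ.1, fun i => ht (hρ.2 i)⟩

/-- Preservation theorem for the join abstraction: if `α_K(F) ⊨ Φ` for a
linear-time property `Φ`, then `π_k(F) ⊨ Φ` for every `k ∈ K`, i.e. `F ⊨ Φ`. -/
theorem join_abstraction_preservation {S Conf : Type*}
    (I : Set S) (trans : Set (S × S)) (K : Set Conf) (δ : S × S → Set Conf)
    (Φ : Set (ℕ → S))
    (h : Paths I {t ∈ trans | ∃ k ∈ K, k ∈ δ t} ⊆ Φ) :
    ∀ k ∈ K, Paths I {t ∈ trans | k ∈ δ t} ⊆ Φ :=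
  fun k hk =>
    have projection_le_join : {t ∈ trans | k ∈ δ t} ⊆ {t ∈ trans | ∃ k ∈ K, k ∈ δ t} :=
      fun _ ht => ⟨ht.1, k, hk, ht.2⟩
    (paths_monotone I projection_le_join).trans h
end

section
/- Partition decomposition of lifted model checking: let F = (I, trans, K, δ) be a featured transition system over state type S, let Φ be a linear-time property over S, and let K₁, …, Kₙ be a partition of K (the Kᵢ are pairwise disjoint and their union is K). Then F ⊨ Φ if and only if π_{Kᵢ}(F) ⊨ Φ for every i ∈ {1, …, n}. -/
theorem sep_mem_sep_exists_eq_of_mem {α Conf : Type*} {trans : Set α} {δ : α → Set Conf}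
    {K' : Set Conf} {k : Conf} (hk : k ∈ K') :
    {t ∈ {t ∈ trans | ∃ k' ∈ K', k' ∈ δ t} | k ∈ δ t} = {t ∈ trans | k ∈ δ t} :=
  Set.ext fun _ => ⟨fun ⟨⟨ht, _⟩, hkt⟩ => ⟨ht, hkt⟩, fun ⟨ht, hkt⟩ => ⟨⟨ht, k, hk, hkt⟩, hkt⟩⟩

theorem partition_decomposition_general {S Conf : Type*}
    (I : Set S) (trans : Set (S × S)) (K : Set Conf) (δ : S × S → Set Conf)
    (Φ : Set (ℕ → S)) (n : ℕ) (Ks : Fin n → Set Conf)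
    (hunion : (⋃ i, Ks i) = K) :
    (∀ k ∈ K, Paths I {t ∈ trans | k ∈ δ t} ⊆ Φ) ↔
    (∀ i, ∀ k ∈ Ks i,
      Paths I {t ∈ {t ∈ trans | ∃ k' ∈ Ks i, k' ∈ δ t} | k ∈ δ t} ⊆ Φ) := by
  subst hunion
  refine (Set.iUnion_subset_iff (t := {k | Paths I {t ∈ trans | k ∈ δ t} ⊆ Φ})).trans ?_
  exact forall_congr' fun i => forall₂_congr fun k hk => by
    rw [sep_mem_sep_exists_eq_of_mem hk, Set.mem_ofPred_eq]

/-- Partition decomposition of lifted model checking: if `K₁, …, Kₙ` partition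
`K`, then `F ⊨ Φ` iff `π_{Kᵢ}(F) ⊨ Φ` for every `i`. -/
theorem partition_decomposition {S Conf : Type*}
    (I : Set S) (trans : Set (S × S)) (K : Set Conf) (δ : S × S → Set Conf)
    (Φ : Set (ℕ → S)) (n : ℕ) (Ks : Fin n → Set Conf)
    (hdisj : ∀ i j, i ≠ j → Disjoint (Ks i) (Ks j))
    (hunion : (⋃ i, Ks i) = K) :
    (∀ k ∈ K, Paths I {t ∈ trans | k ∈ δ t} ⊆ Φ) ↔
    (∀ i, ∀ k ∈ Ks i,
      Paths I {t ∈ {t ∈ trans | ∃ k' ∈ Ks i, k' ∈ δ t} | k ∈ δ t} ⊆ Φ) :=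
  partition_decomposition_general I trans K δ Φ n Ks hunion
end

section
/- Soundness of blockwise abstraction: let F = (I, trans, K, δ) be a featured transition system over state type S, let Φ be a linear-time property over S, and let K₁, …, Kₙ be a partition of K (pairwise disjoint with union K). If α_{Kᵢ}(π_{Kᵢ}(F)) ⊨ Φ for every i ∈ {1, …, n}, then F ⊨ Φ. Moreover, for any single block Kⱼ, if α_{Kⱼ}(π_{Kⱼ}(F)) ⊨ Φ then π_k(F) ⊨ Φ for every k ∈ Kⱼ. -/
theorem Paths.mono {S : Type*} {I : Set S} {trans trans' : Set (S × S)}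
    (h : trans ⊆ trans') : Paths I trans ⊆ Paths I trans' :=
  fun _ hρ => ⟨hρ.1, fun i => h (hρ.2 i)⟩

section Projection

variable {S Conf : Type*} {trans : Set (S × S)} {δ : S × S → Set Conf} {B : Set Conf}

theorem projection_subset_join_projection {k : Conf} (hk : k ∈ B) :
    {t ∈ trans | k ∈ δ t} ⊆
      {t ∈ {t ∈ trans | ∃ k ∈ B, k ∈ δ t} | ∃ k ∈ B, k ∈ δ t} :=
  fun _ ⟨ht, hkt⟩ => ⟨⟨ht, k, hk, hkt⟩, k, hk, hkt⟩

theorem projection_sat_of_join_projection_sat {I : Set S} {Φ : Set (ℕ → S)}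
    (h : Paths I {t ∈ {t ∈ trans | ∃ k ∈ B, k ∈ δ t} | ∃ k ∈ B, k ∈ δ t} ⊆ Φ)
    {k : Conf} (hk : k ∈ B) : Paths I {t ∈ trans | k ∈ δ t} ⊆ Φ :=
  (Paths.mono (projection_subset_join_projection hk)).trans h

end Projection

theorem blockwise_abstraction_sound_general {S Conf : Type*}
    (I : Set S) (trans : Set (S × S)) (K : Set Conf) (δ : S × S → Set Conf)
    (Φ : Set (ℕ → S)) (n : ℕ) (Ks : Fin n → Set Conf)
    (hunion : (⋃ i, Ks i) = K) :
    ((∀ i, Paths I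
        {t ∈ {t ∈ trans | ∃ k ∈ Ks i, k ∈ δ t} | ∃ k ∈ Ks i, k ∈ δ t} ⊆ Φ) →
      ∀ k ∈ K, Paths I {t ∈ trans | k ∈ δ t} ⊆ Φ) ∧
    (∀ j, (Paths I
        {t ∈ {t ∈ trans | ∃ k ∈ Ks j, k ∈ δ t} | ∃ k ∈ Ks j, k ∈ δ t} ⊆ Φ) →
      ∀ k ∈ Ks j, Paths I {t ∈ trans | k ∈ δ t} ⊆ Φ) := by
  refine ⟨fun h k hk => ?_, fun j => projection_sat_of_join_projection_sat⟩
  obtain ⟨i, hki⟩ := Set.mem_iUnion.mp (hunion ▸ hk)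
  exact projection_sat_of_join_projection_sat (h i) hki

/-- Soundness of blockwise abstraction: if `K₁, …, Kₙ` partition `K` and
`α_{Kᵢ}(π_{Kᵢ}(F)) ⊨ Φ` for every `i`, then `F ⊨ Φ`.  Moreover, for any single
block `Kⱼ`, `α_{Kⱼ}(π_{Kⱼ}(F)) ⊨ Φ` implies `π_k(F) ⊨ Φ` for every `k ∈ Kⱼ`. -/
theorem blockwise_abstraction_sound {S Conf : Type*}
    (I : Set S) (trans : Set (S × S)) (K : Set Conf) (δ : S × S → Set Conf)
    (Φ : Set (ℕ → S)) (n : ℕ) (Ks : Fin n → Set Conf)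
    (hdisj : ∀ i j, i ≠ j → Disjoint (Ks i) (Ks j))
    (hunion : (⋃ i, Ks i) = K) :
    ((∀ i, Paths I
        {t ∈ {t ∈ trans | ∃ k ∈ Ks i, k ∈ δ t} | ∃ k ∈ Ks i, k ∈ δ t} ⊆ Φ) →
      ∀ k ∈ K, Paths I {t ∈ trans | k ∈ δ t} ⊆ Φ) ∧
    (∀ j, (Paths I
        {t ∈ {t ∈ trans | ∃ k ∈ Ks j, k ∈ δ t} | ∃ k ∈ Ks j, k ∈ δ t} ⊆ Φ) →
      ∀ k ∈ Ks j, Paths I {t ∈ trans | k ∈ δ t} ⊆ Φ) :=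
  blockwise_abstraction_sound_general I trans K δ Φ n Ks hunion
end
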